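/- Under the hypotheses of the connection formula P_n = S_n + a_n S_{n-1} with a_n = (n−1)λ h_n/(z h̃_{n-1}) and structure relation ΔP_n = nP_{n-1} + ξ_n P_{n-2} (ξ_n = γ_n γ_{n-1}/z), the Sobolev norms satisfy the nonlinear recurrence h̃_n = λn²h_{n-1} + (1 + λγ_n γ_{n-1}/z²)h_n − (n−1)²(λ²/z²)·h_n²/h̃_{n-1} for n ≥ 2. -/

import Mathlib

/-!
For `n ≥ 2` the structure relation makes `P n` quasi-orthogonal of order one for the Sobolev
form: `⟨P n, q⟩ = 0` whenever `deg q < n - 1`, because `L`-orthogonality kills `L[P n q]` and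
`Δq` has degree `< n - 2`. Expanding `P n = S n + a_n S (n-1) + r` in the Sobolev-orthogonal
basis then gives `⟨P n, P n⟩ = h̃ n + ⟨P n, S (n-1)⟩² / h̃ (n-1)`. Both inner products are
computed from the structure relation: `⟨P n, P n⟩ = h n + λ (n² h (n-1) + ξ n² h (n-2))` and
`⟨P n, S (n-1)⟩ = λ ξ n (n-1) h (n-2)`, and `ξ n h (n-2) = h n / z`.
-/

open Polynomial

/-- The forward difference operator on polynomials: `Δp = p(x+1) - p(x)`. -/
noncomputable def fdiff (p : Polynomial ℝ) : Polynomial ℝ := p.comp (X + 1) - p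

lemma fdiff_eq_taylor_sub (p : ℝ[X]) : fdiff p = taylor 1 p - p := by
  simp [fdiff, taylor_apply]

noncomputable def fdiffₗ : ℝ[X] →ₗ[ℝ] ℝ[X] := taylor 1 - LinearMap.id

@[simp]
lemma fdiffₗ_apply (p : ℝ[X]) : fdiffₗ p = fdiff p := by
  simp [fdiffₗ, fdiff_eq_taylor_sub]

lemma degree_fdiff_lt {p : ℝ[X]} (hp : p ≠ 0) : (fdiff p).degree < p.degree := by
  rw [fdiff_eq_taylor_sub]
  exact degree_sub_lt_right (degree_taylor p 1) hp (leadingCoeff_taylor 1 p)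

lemma coeff_fdiff_of_natDegree_le {p : ℝ[X]} {m : ℕ} (hp : p.natDegree ≤ m + 1) :
    (fdiff p).coeff m = (m + 1) * p.coeff (m + 1) := by
  have hdeg : (hasseDeriv m p).natDegree < 2 :=
    (natDegree_hasseDeriv_le p m).trans_lt (by omega)
  rw [fdiff_eq_taylor_sub, coeff_sub, taylor_coeff, eval_eq_sum_range' hdeg]
  simp [Finset.sum_range_succ, hasseDeriv_coeff, add_comm 1 m]

lemma degree_fdiff_lt_of_degree_le {p : ℝ[X]} {n : ℕ} (hp : p.degree ≤ n) :
    (fdiff p).degree < n := by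
  rcases eq_or_ne p 0 with rfl | hp0
  · simp [fdiff]
  · exact (degree_fdiff_lt hp0).trans_le hp

lemma Polynomial.IsMonicOfDegree.degree_eq {R : Type*} [Semiring R] [Nontrivial R] {p : R[X]}
    {n : ℕ} (hp : IsMonicOfDegree p n) : p.degree = n := by
  rw [degree_eq_natDegree hp.ne_zero, hp.natDegree_eq]

section MonicFamily

variable {R M : Type*} [CommRing R] [AddCommGroup M] [Module R M]
  {Q : ℕ → R[X]} (hQ : ∀ k, IsMonicOfDegree (Q k) k)
include hQ

lemma degree_sub_C_coeff_mul_lt {q : R[X]} {n : ℕ} (hq : q.degree ≤ n) :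
    (q - C (q.coeff n) * Q n).degree < n := by
  rw [degree_lt_iff_coeff_zero]
  intro j hj
  rcases hj.eq_or_lt with rfl | hlt
  · have hlead := (hQ n).monic.coeff_natDegree
    rw [(hQ n).natDegree_eq] at hlead
    rw [coeff_sub, coeff_C_mul, hlead, mul_one, sub_self]
  · rw [coeff_sub, coeff_C_mul,
      coeff_eq_zero_of_degree_lt (hq.trans_lt (WithBot.coe_lt_coe.2 hlt)),
      coeff_eq_zero_of_natDegree_lt ((hQ n).natDegree_eq.trans_lt hlt), mul_zero, sub_zero]

lemma map_eq_zero_of_degree_lt (φ : R[X] →ₗ[R] M) {n : ℕ} (hφ : ∀ k < n, φ (Q k) = 0)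
    {q : R[X]} (hq : q.degree < n) : φ q = 0 := by
  induction n generalizing q with
  | zero =>
    rw [Nat.cast_zero, Nat.WithBot.lt_zero_iff, degree_eq_bot] at hq
    rw [hq, map_zero]
  | succ n ih =>
    have hr := degree_sub_C_coeff_mul_lt hQ (Order.le_of_lt_succ hq)
    rw [← sub_add_cancel q (C (q.coeff n) * Q n), map_add, ih (fun k hk => hφ k (by omega)) hr,
      ← smul_eq_C_mul, map_smul, hφ n n.lt_succ_self, smul_zero, zero_add]

lemma map_eq_coeff_smul (φ : R[X] →ₗ[R] M) {n : ℕ} (hφ : ∀ k < n, φ (Q k) = 0)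
    {q : R[X]} (hq : q.degree ≤ n) : φ q = q.coeff n • φ (Q n) := by
  conv_lhs => rw [← sub_add_cancel q (C (q.coeff n) * Q n)]
  rw [map_add, map_eq_zero_of_degree_lt hQ φ hφ (degree_sub_C_coeff_mul_lt hQ hq),
    ← smul_eq_C_mul, map_smul, zero_add]

end MonicFamily

section OrthogonalFamily

variable {R : Type*} [CommRing R] {B : LinearMap.BilinForm R R[X]}
  {S : ℕ → R[X]} (hSm : ∀ k, IsMonicOfDegree (S k) k) {N : ℕ → R}
  (hS : ∀ j k, B (S j) (S k) = if j = k then N k else 0)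
include hSm hS

lemma apply_eq_zero_of_degree_lt {n : ℕ} {q : R[X]} (hq : q.degree < n) : B (S n) q = 0 :=
  map_eq_zero_of_degree_lt hSm (B (S n)) (fun k hk => by rw [hS, if_neg hk.ne']) hq

lemma apply_eq_coeff_mul {n : ℕ} {q : R[X]} (hq : q.degree ≤ n) :
    B (S n) q = q.coeff n * N n := by
  rw [map_eq_coeff_smul hSm (B (S n)) (fun k hk => by rw [hS, if_neg hk.ne']) hq,
    hS, if_pos rfl, smul_eq_mul]

end OrthogonalFamily

section QuasiOrthogonal

variable {K : Type*} [Field K] {B : LinearMap.BilinForm K K[X]}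
  {S : ℕ → K[X]} (hSm : ∀ k, IsMonicOfDegree (S k) k) {N : ℕ → K}
  (hS : ∀ j k, B (S j) (S k) = if j = k then N k else 0)
include hSm hS

/-- Write `p = S (n + 1) + c • S n + r` with `deg r < n`: orthogonality of the `S k` gives
`B (S (n + 1)) p = N (n + 1)` and `c * N n = B (S n) p`, and `B p r = 0` by hypothesis. -/
lemma apply_self_eq_of_quasiOrthogonal (hB : B.IsSymm) {p : K[X]} {n : ℕ}
    (hp : IsMonicOfDegree p (n + 1)) (hpq : ∀ q : K[X], q.degree < n → B p q = 0) :
    B p p = N (n + 1) + B p (S n) ^ 2 / N n := by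
  set d := p - S (n + 1)
  have hd : d.degree ≤ n :=
    degree_le_of_natDegree_le (Nat.lt_succ_iff.1 (hp.natDegree_sub_lt n.succ_ne_zero (hSm _)))
  set c := d.coeff n
  have hc : c * N n = B p (S n) := by
    rw [← apply_eq_coeff_mul hSm hS hd, map_sub, hS, if_neg (by omega), sub_zero, hB.eq]
  have hdecomp : p = S (n + 1) + C c * S n + (d - C c * S n) := by ring
  have htop : B p (S (n + 1)) = N (n + 1) := by
    rw [← hB.eq, ← sub_add_cancel p (S (n + 1)), map_add, hS, if_pos rfl,
      apply_eq_zero_of_degree_lt hSm hS (hd.trans_lt (by exact_mod_cast n.lt_succ_self)), zero_add]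
  calc B p p = B p (S (n + 1)) + c * B p (S n) + B p (d - C c * S n) := by
        nth_rw 2 [hdecomp]
        rw [map_add, map_add, ← smul_eq_C_mul, map_smul, smul_eq_mul]
    _ = N (n + 1) + B p (S n) ^ 2 / N n := by
        rw [htop, hpq _ (degree_sub_C_coeff_mul_lt hSm hd), add_zero, ← hc]
        field_simp

end QuasiOrthogonal

noncomputable def momentForm {R : Type*} [CommRing R] (L : R[X] →ₗ[R] R) :
    LinearMap.BilinForm R R[X] :=
  (LinearMap.mul R R[X]).compr₂ L

@[simp]
lemma momentForm_apply {R : Type*} [CommRing R] (L : R[X] →ₗ[R] R) (p q : R[X]) :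
    momentForm L p q = L (p * q) := rfl

lemma momentForm_isSymm {R : Type*} [CommRing R] (L : R[X] →ₗ[R] R) : (momentForm L).IsSymm :=
  ⟨fun p q => by rw [momentForm_apply, momentForm_apply, mul_comm]⟩

noncomputable def sobolevForm (L : ℝ[X] →ₗ[ℝ] ℝ) (lam : ℝ) : LinearMap.BilinForm ℝ ℝ[X] :=
  momentForm L + lam • (momentForm L).compl₁₂ fdiffₗ fdiffₗ

lemma sobolevForm_apply (L : ℝ[X] →ₗ[ℝ] ℝ) (lam : ℝ) (p q : ℝ[X]) :
    sobolevForm L lam p q = L (p * q) + lam * L (fdiff p * fdiff q) := by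
  simp [sobolevForm]

lemma sobolevForm_isSymm (L : ℝ[X] →ₗ[ℝ] ℝ) (lam : ℝ) : (sobolevForm L lam).IsSymm :=
  ⟨fun p q => by simp only [sobolevForm_apply, mul_comm]⟩

section StructureRelation

variable (L : ℝ[X] →ₗ[ℝ] ℝ) (lam : ℝ) {P : ℕ → ℝ[X]} (hP : ∀ k, IsMonicOfDegree (P k) k)
  {h : ℕ → ℝ} (hPortho : ∀ j k, momentForm L (P j) (P k) = if j = k then h k else 0)
  {k : ℕ} {a b : ℝ} (hΔ : fdiff (P (k + 2)) = C a * P (k + 1) + C b * P k)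

include hΔ in
lemma momentForm_fdiff_apply (q : ℝ[X]) :
    momentForm L (fdiff (P (k + 2))) q =
      a * momentForm L (P (k + 1)) q + b * momentForm L (P k) q := by
  rw [hΔ, map_add, C_mul', C_mul', map_smul, map_smul]
  rfl

include hΔ hPortho

lemma sobolevForm_self :
    sobolevForm L lam (P (k + 2)) (P (k + 2)) =
      h (k + 2) + lam * (a ^ 2 * h (k + 1) + b ^ 2 * h k) := by
  rw [sobolevForm_apply, ← momentForm_apply, ← momentForm_apply, momentForm_fdiff_apply L hΔ,
    (momentForm_isSymm L).eq (P (k + 1)), (momentForm_isSymm L).eq (P k),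
    momentForm_fdiff_apply L hΔ, momentForm_fdiff_apply L hΔ]
  simp only [hPortho, if_pos, if_neg (show k + 1 ≠ k by omega),
    if_neg (show k ≠ k + 1 by omega)]
  ring

include hP

lemma sobolevForm_eq_zero_of_degree_lt {q : ℝ[X]} (hq : q.degree < (k + 1 : ℕ)) :
    sobolevForm L lam (P (k + 2)) q = 0 := by
  have hΔq := degree_fdiff_lt_of_degree_le (Order.le_of_lt_succ hq)
  have hL : L (P (k + 2) * q) = 0 := apply_eq_zero_of_degree_lt hP hPortho
    (hq.trans (by exact_mod_cast (show k + 1 < k + 2 by omega)))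
  have hLΔ : L (fdiff (P (k + 2)) * fdiff q) = 0 := by
    rw [← momentForm_apply, momentForm_fdiff_apply L hΔ,
      apply_eq_zero_of_degree_lt hP hPortho (hΔq.trans (by exact_mod_cast k.lt_succ_self)),
      apply_eq_zero_of_degree_lt hP hPortho hΔq, mul_zero, mul_zero, add_zero]
  rw [sobolevForm_apply, hL, hLΔ, mul_zero, add_zero]

lemma sobolevForm_apply_of_isMonicOfDegree {s : ℝ[X]} (hs : IsMonicOfDegree s (k + 1)) :
    sobolevForm L lam (P (k + 2)) s = lam * (b * ((k + 1) * h k)) := by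
  have hL : L (P (k + 2) * s) = 0 := apply_eq_zero_of_degree_lt hP hPortho
    (by rw [hs.degree_eq]; exact_mod_cast (show k + 1 < k + 2 by omega))
  have hΔs := degree_fdiff_lt_of_degree_le hs.degree_eq.le
  have hcoeff : (fdiff s).coeff k = k + 1 := by
    rw [coeff_fdiff_of_natDegree_le hs.natDegree_eq.le, ((isMonicOfDegree_iff s _).1 hs).2, mul_one]
  have hLΔ : L (fdiff (P (k + 2)) * fdiff s) = b * ((k + 1) * h k) := by
    rw [← momentForm_apply, momentForm_fdiff_apply L hΔ,
      apply_eq_zero_of_degree_lt hP hPortho hΔs,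
      apply_eq_coeff_mul hP hPortho (Order.le_of_lt_succ hΔs), hcoeff, mul_zero, zero_add]
  rw [sobolevForm_apply, hL, hLΔ, zero_add]

end StructureRelation

theorem sobolev_norm_recurrence_general (L : Polynomial ℝ →ₗ[ℝ] ℝ) (z lam : ℝ)
    (P S : ℕ → Polynomial ℝ)
    (hPmonic : ∀ n, (P n).Monic) (hPdeg : ∀ n, (P n).natDegree = n)
    (hSmonic : ∀ n, (S n).Monic) (hSdeg : ∀ n, (S n).natDegree = n)
    (h htil : ℕ → ℝ) (hne : ∀ n, h n ≠ 0)
    (hPortho : ∀ k n, L (P k * P n) = if k = n then h n else 0)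
    (ip : Polynomial ℝ → Polynomial ℝ → ℝ)
    (hip : ∀ p q, ip p q = L (p * q) + lam * L (fdiff p * fdiff q))
    (hSortho : ∀ k n, ip (S k) (S n) = if k = n then htil n else 0)
    (γ ξ : ℕ → ℝ)
    (hγ : ∀ n, 1 ≤ n → γ n = h n / h (n - 1))
    (hstruct : ∀ n, 2 ≤ n →
      fdiff (P n) = C (n : ℝ) * P (n - 1) + C (ξ n) * P (n - 2))
    (hξ : ∀ n, 2 ≤ n → ξ n = γ n * γ (n - 1) / z) :
    ∀ n, 2 ≤ n →
      htil n = lam * (n : ℝ) ^ 2 * h (n - 1) +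
        (1 + lam * γ n * γ (n - 1) / z ^ 2) * h n -
        ((n : ℝ) - 1) ^ 2 * (lam ^ 2 / z ^ 2) * (h n) ^ 2 / htil (n - 1) := by
  intro n hn
  obtain ⟨k, rfl⟩ : ∃ k, n = k + 2 := ⟨n - 2, by omega⟩
  have hP : ∀ k, IsMonicOfDegree (P k) k := fun k => ⟨hPdeg k, hPmonic k⟩
  have hS : ∀ k, IsMonicOfDegree (S k) k := fun k => ⟨hSdeg k, hSmonic k⟩
  have hSortho' : ∀ j k, sobolevForm L lam (S j) (S k) = if j = k then htil k else 0 :=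
    fun j k => by rw [sobolevForm_apply, ← hip, hSortho]
  have hΔ : fdiff (P (k + 2)) = C ((k + 2 : ℕ) : ℝ) * P (k + 1) + C (ξ (k + 2)) * P k :=
    hstruct (k + 2) (by omega)
  have hγ2 : γ (k + 2) = h (k + 2) / h (k + 1) := hγ _ (by omega)
  have hγ1 : γ (k + 1) = h (k + 1) / h k := hγ _ (by omega)
  have hξ' : ξ (k + 2) = h (k + 2) / (h k * z) := by
    rw [hξ _ (by omega), show k + 2 - 1 = k + 1 from rfl, hγ2, hγ1]
    field_simp [hne (k + 1)]
  have hnorm := eq_sub_of_add_eq (apply_self_eq_of_quasiOrthogonal hS hSortho'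
    (sobolevForm_isSymm L lam) (hP (k + 2))
    (fun _ hq => sobolevForm_eq_zero_of_degree_lt L lam hP hPortho hΔ hq)).symm
  rw [sobolevForm_self L lam hPortho hΔ,
    sobolevForm_apply_of_isMonicOfDegree L lam hP hPortho hΔ (hS (k + 1)), hξ'] at hnorm
  rw [show k + 2 - 1 = k + 1 from rfl, hnorm, hγ2, hγ1]
  push_cast
  field_simp [hne k, hne (k + 1)]
  ring

theorem sobolev_norm_recurrence (L : Polynomial ℝ →ₗ[ℝ] ℝ) (z lam : ℝ)
    (hz : 0 < z) (hlam : 0 < lam)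
    (P S : ℕ → Polynomial ℝ)
    (hPmonic : ∀ n, (P n).Monic) (hPdeg : ∀ n, (P n).natDegree = n)
    (hSmonic : ∀ n, (S n).Monic) (hSdeg : ∀ n, (S n).natDegree = n)
    (h htil : ℕ → ℝ) (hne : ∀ n, h n ≠ 0) (htilne : ∀ n, htil n ≠ 0)
    (hPortho : ∀ k n, L (P k * P n) = if k = n then h n else 0)
    (ip : Polynomial ℝ → Polynomial ℝ → ℝ)
    (hip : ∀ p q, ip p q = L (p * q) + lam * L (fdiff p * fdiff q))
    (hSortho : ∀ k n, ip (S k) (S n) = if k = n then htil n else 0)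
    (γ ξ : ℕ → ℝ)
    (hγ : ∀ n, 1 ≤ n → γ n = h n / h (n - 1))
    (hstruct : ∀ n, 2 ≤ n →
      fdiff (P n) = C (n : ℝ) * P (n - 1) + C (ξ n) * P (n - 2))
    (hξ : ∀ n, 2 ≤ n → ξ n = γ n * γ (n - 1) / z) :
    ∀ n, 2 ≤ n →
      htil n = lam * (n : ℝ) ^ 2 * h (n - 1) +
        (1 + lam * γ n * γ (n - 1) / z ^ 2) * h n -
        ((n : ℝ) - 1) ^ 2 * (lam ^ 2 / z ^ 2) * (h n) ^ 2 / htil (n - 1) :=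
  sobolev_norm_recurrence_general L z lam P S hPmonic hPdeg hSmonic hSdeg h htil hne hPortho ip hip
    hSortho γ ξ hγ hstruct hξ
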